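/- An element x : T belongs to M if and only if x admits an M-recursive description; that is, M coincides with the set of all elements of T which admit an M-recursive description. -/

import Mathlib

/-!
Call a list a derivation if each entry lies in `Base` or is an operation applied to entries
occurring before it; a description of `x` is a derivation ending in `x`. Induction along the
list shows that every entry of a derivation lies in each closed set, hence in `M`. Conversely,
the entries of derivations form a closed set: derivations may be concatenated, so derivations
of the arguments of `ops i v` glue to one that extends by `ops i v`. Thus `M` is contained in it.
-/

def RecClosed {T : Type*} {ι : Type*} (n : ι → ℕ)
    (ops : ∀ i : ι, (Fin (n i) → T) → T) (Base : Set T) (S : Set T) : Prop :=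
  Base ⊆ S ∧ ∀ i : ι, ∀ v : Fin (n i) → T, (∀ j, v j ∈ S) → ops i v ∈ S

def Mset {T : Type*} {ι : Type*} (n : ι → ℕ)
    (ops : ∀ i : ι, (Fin (n i) → T) → T) (Base : Set T) : Set T :=
  ⋂₀ {S : Set T | RecClosed n ops Base S}

/-- `l` is an M-recursive description of `x`: `l` is nonempty, its last entry is `x`,
and each entry either lies in `Base` or is the value of some operation applied to
elements occurring at strictly earlier positions of `l`. -/
def IsDescription {T : Type*} {ι : Type*} (n : ι → ℕ)
    (ops : ∀ i : ι, (Fin (n i) → T) → T) (Base : Set T) (l : List T) (x : T) : Prop :=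
  l ≠ [] ∧ l.getLast? = some x ∧
    ∀ p : Fin l.length, l.get p ∈ Base ∨
      ∃ i : ι, ∃ v : Fin (n i) → T, l.get p = ops i v ∧
        ∀ j, ∃ q : Fin l.length, (q : ℕ) < (p : ℕ) ∧ l.get q = v j

theorem List.mem_take_iff_exists_get {α : Type*} {l : List α} {k : ℕ} {a : α} :
    a ∈ l.take k ↔ ∃ q : Fin l.length, (q : ℕ) < k ∧ l.get q = a := by
  rw [List.mem_take_iff_getElem]
  constructor
  · rintro ⟨i, hi, rfl⟩
    exact ⟨⟨i, (lt_min_iff.mp hi).2⟩, (lt_min_iff.mp hi).1, rfl⟩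
  · rintro ⟨q, hq, rfl⟩
    exact ⟨q, lt_min hq q.isLt, rfl⟩

namespace Mset

variable {T ι : Type*} {n : ι → ℕ} {ops : ∀ i : ι, (Fin (n i) → T) → T} {Base : Set T}

variable (n ops Base) in
def Justified (l : List T) (x : T) : Prop :=
  x ∈ Base ∨ ∃ i : ι, ∃ v : Fin (n i) → T, x = ops i v ∧ ∀ j, v j ∈ l

theorem Justified.mono {l l' : List T} {x : T} (h : l ⊆ l') (hx : Justified n ops Base l x) :
    Justified n ops Base l' x :=
  hx.imp_right fun ⟨i, v, hv, hmem⟩ => ⟨i, v, hv, fun j => h (hmem j)⟩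

variable (n ops Base) in
inductive IsDerivation : List T → Prop
  | nil : IsDerivation []
  | snoc {l : List T} {x : T} : IsDerivation l → Justified n ops Base l x →
      IsDerivation (l ++ [x])

theorem isDerivation_snoc_iff {l : List T} {x : T} :
    IsDerivation n ops Base (l ++ [x]) ↔ IsDerivation n ops Base l ∧ Justified n ops Base l x := by
  refine ⟨fun h => ?_, fun ⟨hl, hx⟩ => hl.snoc hx⟩
  generalize hl' : l ++ [x] = l' at h
  cases h with
  | nil => simp at hl'
  | snoc hl hx =>
    obtain ⟨rfl, rfl⟩ := List.append_singleton_inj.mp hl'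
    exact ⟨hl, hx⟩

theorem isDerivation_iff_forall_take {l : List T} :
    IsDerivation n ops Base l ↔
      ∀ k (hk : k < l.length), Justified n ops Base (l.take k) l[k] := by
  induction l using List.reverseRecOn with
  | nil => simp [IsDerivation.nil]
  | append_singleton l x ih =>
    rw [isDerivation_snoc_iff, ih]
    constructor
    · rintro ⟨h, hx⟩ k hk
      rcases Nat.lt_succ_iff_lt_or_eq.mp (by simpa using hk) with hk | rfl
      · simpa [List.take_append_of_le_length hk.le, List.getElem_append_left hk] using h k hk
      · simpa using hx
    · intro h
      refine ⟨fun k hk => ?_, by simpa using h l.length (by simp)⟩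
      have := h k (by simp; omega)
      rwa [List.take_append_of_le_length hk.le, List.getElem_append_left hk] at this

theorem IsDerivation.append {l l' : List T} (hl : IsDerivation n ops Base l)
    (hl' : IsDerivation n ops Base l') : IsDerivation n ops Base (l ++ l') := by
  induction hl' with
  | nil => simpa
  | snoc _ hx ih =>
    rw [← List.append_assoc]
    exact ih.snoc (hx.mono (List.subset_append_right _ _))

theorem IsDerivation.flatten {L : List (List T)} (h : ∀ l ∈ L, IsDerivation n ops Base l) :
    IsDerivation n ops Base L.flatten := by
  induction L with
  | nil => exact .nil
  | cons l L ih =>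
    exact (h l List.mem_cons_self).append (ih fun l' hl' => h l' (List.mem_cons_of_mem l hl'))

theorem IsDerivation.justified_of_mem {l : List T} {x : T} (hl : IsDerivation n ops Base l)
    (hx : x ∈ l) : Justified n ops Base l x := by
  induction hl with
  | nil => simp at hx
  | snoc _ hy ih =>
    rcases List.mem_append.mp hx with hx | hx
    · exact (ih hx).mono (List.subset_append_left _ _)
    · rw [List.mem_singleton.mp hx]
      exact hy.mono (List.subset_append_left _ _)

theorem IsDerivation.mem_mset {l : List T} (hl : IsDerivation n ops Base l) {x : T}
    (hx : x ∈ l) : x ∈ Mset n ops Base := by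
  intro S hS
  induction hl generalizing x with
  | nil => simp at hx
  | snoc _ hy ih =>
    rcases List.mem_append.mp hx with hx | hx
    · exact ih hx
    · rw [List.mem_singleton.mp hx]
      rcases hy with hb | ⟨i, v, rfl, hv⟩
      · exact hS.1 hb
      · exact hS.2 i v fun j => ih (hv j)

theorem recClosed_setOf_mem_derivation :
    RecClosed n ops Base {x | ∃ l, IsDerivation n ops Base l ∧ x ∈ l} := by
  refine ⟨fun b hb => ⟨[] ++ [b], IsDerivation.nil.snoc (Or.inl hb), by simp⟩, fun i v hv => ?_⟩
  choose L hL hvL using hv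
  have hflat : IsDerivation n ops Base (List.ofFn L).flatten :=
    IsDerivation.flatten fun l hl => by
      obtain ⟨j, rfl⟩ := List.mem_ofFn.mp hl
      exact hL j
  refine ⟨_, hflat.snoc (Or.inr ⟨i, v, rfl, fun j => ?_⟩), List.mem_concat_self⟩
  exact List.mem_flatten.mpr ⟨L j, List.mem_ofFn.mpr ⟨j, rfl⟩, hvL j⟩

theorem isDescription_iff_isDerivation {l : List T} {x : T} :
    IsDescription n ops Base l x ↔ l.getLast? = some x ∧ IsDerivation n ops Base l := by
  simp only [IsDescription, isDerivation_iff_forall_take, Justified, List.mem_take_iff_exists_get]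
  simp only [Fin.forall_iff, List.get_eq_getElem]
  exact and_iff_right_of_imp fun ⟨hx, _⟩ hl => by simp [hl] at hx

theorem mset_subset_setOf_mem_derivation :
    Mset n ops Base ⊆ {x | ∃ l, IsDerivation n ops Base l ∧ x ∈ l} :=
  Set.sInter_subset_of_mem recClosed_setOf_mem_derivation

end Mset

open Mset in
theorem mem_Mset_iff_description {T : Type*} {ι : Type*} (n : ι → ℕ)
    (ops : ∀ i : ι, (Fin (n i) → T) → T) (Base : Set T) (x : T) :
    x ∈ Mset n ops Base ↔ ∃ l : List T, IsDescription n ops Base l x := by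
  simp only [isDescription_iff_isDerivation]
  constructor
  · intro hx
    obtain ⟨l, hl, hxl⟩ := mset_subset_setOf_mem_derivation hx
    exact ⟨l ++ [x], by simp, hl.snoc (hl.justified_of_mem hxl)⟩
  · rintro ⟨l, hlast, hl⟩
    exact hl.mem_mset (List.mem_of_getLast? hlast)
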